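/- Let Γ₁, …, Γ_s be nontrivial groups and let Γ = Γ₁ × ⋯ × Γ_s. Suppose that every automorphism of Γ permutes the canonical factor subgroups (for every automorphism φ there is a permutation σ of {1, …, s} with φ(Gᵢ) = G_{σ(i)} for all i). If the outer automorphism group Out(Γᵢ) is finite for every i = 1, …, s, then Out(Γ) is finite. -/

import Mathlib

/-- The `i`-th canonical factor subgroup of a direct product `Γ = Γ₁ × ⋯ × Γ_s`:
tuples whose coordinates are trivial except possibly at position `i`. -/
def factorSubgroup {s : ℕ} (Γ : Fin s → Type*) [∀ i, Group (Γ i)] (i : Fin s) :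
    Subgroup (∀ j, Γ j) where
  carrier := {x | ∀ j, j ≠ i → x j = 1}
  one_mem' := fun _ _ => rfl
  mul_mem' := by
    intro a b ha hb j hj
    simp [Pi.mul_apply, ha j hj, hb j hj]
  inv_mem' := by
    intro a ha j hj
    simp [Pi.inv_apply, ha j hj]

/-- The subgroup of inner automorphisms `Inn(G) ≤ Aut(G)`, i.e. the range of the
conjugation homomorphism `G →* Aut(G)`, is a normal subgroup. -/
instance innRangeNormal (G : Type*) [Group G] :
    ((MulAut.conj : G →* MulAut G).range).Normal := by
  constructor
  rintro _ ⟨g, rfl⟩ φ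
  refine ⟨φ g, ?_⟩
  ext x
  simp [MulAut.conj, mul_assoc]

/-- The outer automorphism group `Out(G) = Aut(G)/Inn(G)`. -/
abbrev OutGroup (G : Type*) [Group G] :=
  MulAut G ⧸ (MulAut.conj : G →* MulAut G).range

/-!
An automorphism `φ` of `Γ` that permutes the factors by `σ` induces isomorphisms
`Γᵢ ≃ Γ_{σ i}`. Two such automorphisms whose induced isomorphisms agree modulo inner
automorphisms differ on each factor by a conjugation, and these conjugations glue to an inner
automorphism of `Γ`. So the class of `φ` in `Out(Γ)` is determined by the classes of the induced
isomorphisms, and for each pair `i, j` the isomorphisms `Γᵢ ≃ Γⱼ` modulo `Inn(Γⱼ)` are in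
bijection with `Out(Γⱼ)` (or there are none), a finite set.
-/

namespace MulEquiv

variable (A B : Type*) [Group A] [Group B]

def innerSetoid : Setoid (A ≃* B) where
  r e e' := ∃ g : B, e' = e.trans (MulAut.conj g)
  iseqv := by
    refine ⟨fun e => ⟨1, by ext; simp⟩, ?_, ?_⟩
    · rintro e _ ⟨g, rfl⟩
      exact ⟨g⁻¹, by ext; simp [mul_assoc]⟩
    · rintro e _ _ ⟨g, rfl⟩ ⟨g', rfl⟩
      exact ⟨g' * g, by ext; simp [mul_assoc]⟩

/-- Given `e₀ : A ≃* B`, the map `e ↦ e₀ ∘ e⁻¹` embeds these classes into `Out(B)`. -/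
instance finite_quotient_innerSetoid [Finite (OutGroup B)] :
    Finite (Quotient (innerSetoid A B)) := by
  rcases isEmpty_or_nonempty (A ≃* B) with _ | ⟨⟨e₀⟩⟩
  · infer_instance
  let toOut (e : A ≃* B) : OutGroup B := QuotientGroup.mk (e.symm.trans e₀ : MulAut B)
  refine Finite.of_injective (Quotient.lift toOut ?_) ?_
  · rintro e _ ⟨g, rfl⟩
    have hinner : MulAut.conj g⁻¹ ∈ (MulAut.conj : B →* MulAut B).range := ⟨g⁻¹, rfl⟩
    refine (QuotientGroup.mk_mul_of_mem (e.symm.trans e₀) hinner).symm.trans ?_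
    congr 1
    ext
    simp
  · rintro ⟨e⟩ ⟨e'⟩ hee'
    obtain ⟨g, hg⟩ := QuotientGroup.eq.mp hee'
    refine Quotient.sound ((innerSetoid A B).symm ⟨g, ?_⟩)
    ext x
    simpa using (DFunLike.congr_fun hg (e' x)).symm

end MulEquiv

section FactorSubgroup

variable {s : ℕ} {Γ : Fin s → Type*} [∀ i, Group (Γ i)]

theorem mem_factorSubgroup_iff {i : Fin s} {y : ∀ j, Γ j} :
    y ∈ factorSubgroup Γ i ↔ Pi.mulSingle i (y i) = y := by
  refine ⟨fun hy => funext fun j => ?_, fun hy j hj => hy ▸ Pi.mulSingle_eq_of_ne hj _⟩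
  by_cases hj : j = i
  · subst hj
    exact Pi.mulSingle_eq_same _ _
  · rw [Pi.mulSingle_eq_of_ne hj, hy j hj]

theorem mulSingle_mem_factorSubgroup (i : Fin s) (x : Γ i) :
    Pi.mulSingle i x ∈ factorSubgroup Γ i :=
  fun _ hj => Pi.mulSingle_eq_of_ne hj x

theorem range_mulSingle_eq_factorSubgroup (i : Fin s) :
    (MonoidHom.mulSingle Γ i).range = factorSubgroup Γ i := by
  ext y
  refine ⟨?_, fun hy => ⟨y i, mem_factorSubgroup_iff.mp hy⟩⟩
  rintro ⟨x, rfl⟩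
  exact mulSingle_mem_factorSubgroup i x

noncomputable def factorSubgroupEquiv (i : Fin s) : Γ i ≃* factorSubgroup Γ i :=
  (MonoidHom.ofInjective (Pi.mulSingle_injective i)).trans
    (MulEquiv.subgroupCongr (range_mulSingle_eq_factorSubgroup i))

theorem exists_mulEquiv_of_map_factorSubgroup {φ : MulAut (∀ i, Γ i)} {i j : Fin s}
    (h : (factorSubgroup Γ i).map φ.toMonoidHom = factorSubgroup Γ j) :
    ∃ e : Γ i ≃* Γ j, ∀ x, φ (Pi.mulSingle i x) = Pi.mulSingle j (e x) := by
  refine ⟨(factorSubgroupEquiv i).trans ((φ.subgroupMap _).trans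
    ((MulEquiv.subgroupCongr h).trans (factorSubgroupEquiv j).symm)), fun x => ?_⟩
  exact congrArg Subtype.val ((factorSubgroupEquiv j).apply_symm_apply
    (MulEquiv.subgroupCongr h (φ.subgroupMap _ (factorSubgroupEquiv i x)))).symm

theorem conj_apply_eq_of_mem_factorSubgroup {j : Fin s} {g g' : ∀ k, Γ k} {y : ∀ k, Γ k}
    (hy : y ∈ factorSubgroup Γ j) (hg : g j = g' j) : MulAut.conj g y = MulAut.conj g' y := by
  funext k
  by_cases hk : k = j
  · subst hk
    simp [hg]
  · simp [hy k hk]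

/-- Since `ψ` sends distinct factors into distinct factors, the factorwise conjugating elements
glue to a single one. -/
theorem exists_eq_conj_mul {φ ψ : MulAut (∀ i, Γ i)} (σ : Equiv.Perm (Fin s))
    (hψ : ∀ i, (factorSubgroup Γ i).map ψ.toMonoidHom ≤ factorSubgroup Γ (σ i))
    (hφ : ∀ i, ∃ g : ∀ k, Γ k,
      ∀ x, φ (Pi.mulSingle i x) = MulAut.conj g (ψ (Pi.mulSingle i x))) :
    ∃ g, φ = MulAut.conj g * ψ := by
  choose g hg using hφ
  refine ⟨fun k => g (σ.symm k) k,
    MulEquiv.toMonoidHom_injective <| MonoidHom.pi_ext fun i x => ?_⟩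
  have hmem : ψ (Pi.mulSingle i x) ∈ factorSubgroup Γ (σ i) :=
    hψ i ⟨_, mulSingle_mem_factorSubgroup i x, rfl⟩
  refine (hg i x).trans (conj_apply_eq_of_mem_factorSubgroup hmem ?_)
  simp

/-- For automorphisms permuting the factors, a complete invariant of the class in `Out(Γ)`
that takes finitely many values. -/
def factorClasses (φ : MulAut (∀ i, Γ i)) (i j : Fin s) :
    Set (Quotient (MulEquiv.innerSetoid (Γ i) (Γ j))) :=
  {q | ∃ e : Γ i ≃* Γ j, Quotient.mk _ e = q ∧
    ∀ x, φ (Pi.mulSingle i x) = Pi.mulSingle j (e x)}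

theorem mk_eq_mk_of_factorClasses_eq {φ ψ : MulAut (∀ i, Γ i)} {σ : Equiv.Perm (Fin s)}
    (hψ : ∀ i, (factorSubgroup Γ i).map ψ.toMonoidHom = factorSubgroup Γ (σ i))
    (h : factorClasses φ = factorClasses ψ) : (φ : OutGroup (∀ i, Γ i)) = ψ := by
  suffices ∃ g, φ = MulAut.conj g * ψ by
    obtain ⟨g, rfl⟩ := this
    rw [QuotientGroup.mk_mul, (QuotientGroup.eq_one_iff _).mpr (MonoidHom.mem_range.mpr ⟨g, rfl⟩),
      one_mul]
  refine exists_eq_conj_mul σ (fun i => (hψ i).le) fun i => ?_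
  obtain ⟨e, he⟩ := exists_mulEquiv_of_map_factorSubgroup (hψ i)
  obtain ⟨e', hee', he'⟩ : Quotient.mk _ e ∈ factorClasses φ i (σ i) :=
    h ▸ ⟨e, rfl, he⟩
  obtain ⟨g, rfl⟩ := Quotient.exact hee'.symm
  refine ⟨Pi.mulSingle (σ i) g, fun x => ?_⟩
  rw [he', he]
  simp [Pi.mulSingle_mul, Pi.mulSingle_inv]

end FactorSubgroup

theorem out_finite_of_permutes_factors_general
    {s : ℕ} (Γ : Fin s → Type*) [∀ i, Group (Γ i)]
    (h : ∀ φ : MulAut (∀ i, Γ i), ∃ σ : Equiv.Perm (Fin s),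
      ∀ i, (factorSubgroup Γ i).map φ.toMonoidHom = factorSubgroup Γ (σ i))
    (hfin : ∀ i, Finite (OutGroup (Γ i))) :
    Finite (OutGroup (∀ i, Γ i)) := by
  refine Finite.of_injective (fun o : OutGroup (∀ i, Γ i) => factorClasses o.out)
    fun o o' hoo' => ?_
  obtain ⟨σ, hσ⟩ := h o'.out
  simpa only [QuotientGroup.out_eq'] using mk_eq_mk_of_factorClasses_eq hσ hoo'

/-- Let `Γ₁, …, Γ_s` be nontrivial groups, `Γ` their direct product, and
suppose every automorphism of `Γ` permutes the canonical factor subgroups.  If each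
`Out(Γᵢ)` is finite, then `Out(Γ)` is finite. -/
theorem out_finite_of_permutes_factors
    {s : ℕ} (Γ : Fin s → Type*) [∀ i, Group (Γ i)] [∀ i, Nontrivial (Γ i)]
    (h : ∀ φ : MulAut (∀ i, Γ i), ∃ σ : Equiv.Perm (Fin s),
      ∀ i, (factorSubgroup Γ i).map φ.toMonoidHom = factorSubgroup Γ (σ i))
    (hfin : ∀ i, Finite (OutGroup (Γ i))) :
    Finite (OutGroup (∀ i, Γ i)) :=
  out_finite_of_permutes_factors_general Γ h hfin
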